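/- arXiv:2304.09598 — 5 statements merged into one kernel-verified Lean document; each statement's English description precedes it below -/
import Mathlib

section
/- If α and β are multisegments with α ≤ β in the partial order generated by union-intersection and conjunction moves, then the length L of the longest segment in α is at most the length of the longest segment in β. -/
/-- A segment `[b, e]` is the set of consecutive integers `{b, b+1, ..., e}`,
recorded as the pair `(b, e)` of its base `b` and end `e`. -/
abbrev Segment : Type := ℤ × ℤ

/-- A multisegment is a finite multiset of segments. -/
abbrev Multisegment : Type := Multiset Segment

/-- The length `e - b + 1` of the segment `[b, e]`. -/
def Segment.len (Δ : Segment) : ℤ := Δ.2 - Δ.1 + 1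

/-- `[b₁,e₁]` precedes `[b₂,e₂]` iff `b₁ < b₂`, `e₁ < e₂` and `b₂ ≤ e₁ + 1`. -/
def Precedes (Δ₁ Δ₂ : Segment) : Prop :=
  Δ₁.1 < Δ₂.1 ∧ Δ₁.2 < Δ₂.2 ∧ Δ₂.1 ≤ Δ₁.2 + 1

instance (Δ₁ Δ₂ : Segment) : Decidable (Precedes Δ₁ Δ₂) := by
  unfold Precedes; infer_instance

/-- Every member of a multisegment is a genuine (nonempty) segment. -/
def IsMultisegment (α : Multisegment) : Prop := ∀ Δ ∈ α, Δ.1 ≤ Δ.2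

/-- The rank `r_{i,j}`: the number of segments `[k,l]` of `α` with `k ≤ i` and `j ≤ l`. -/
def rank (α : Multisegment) (i j : ℤ) : ℕ :=
  (α.filter fun Δ => Δ.1 ≤ i ∧ j ≤ Δ.2).card

/-- `n_α`: the number of segments of `α`, counted with multiplicity. -/
def nSeg (α : Multisegment) : ℕ := Multiset.card α

instance : Std.Commutative (fun a b : ℤ => max a b) := ⟨max_comm⟩
instance : Std.Associative (fun a b : ℤ => max a b) := ⟨max_assoc⟩

/-- `L_α`: the length of the longest segment of `α` (0 for the empty multisegment). -/
def Lmax (α : Multisegment) : ℤ := (α.map Segment.len).fold (fun a b => max a b) 0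

/-- The support `∪_{Δ ∈ α} Δ` of a multisegment, as a finite set of integers. -/
noncomputable def supp (α : Multisegment) : Finset ℤ := α.toFinset.biUnion fun Δ => Finset.Icc Δ.1 Δ.2

/-- `S_α`: the number of integers in `∪_{Δ ∈ α} Δ`. -/
noncomputable def Ssize (α : Multisegment) : ℕ := (supp α).card

/-- `c_α`: the number of interval components of `∪_{Δ ∈ α} Δ`
(counted via their left endpoints). -/
noncomputable def comp (α : Multisegment) : ℕ :=
  ((supp α).filter fun x => x - 1 ∉ supp α).card

/-! ### The Mœglin–Waldspurger algorithm -/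

/-- Remove the end value from a segment, dropping it if it becomes empty. -/
def removeEnd (Δ : Segment) : Option Segment :=
  if Δ.1 ≤ Δ.2 - 1 then some (Δ.1, Δ.2 - 1) else none

/-- Among the segments of `l` with end value `m`, pick a shortest one (if any). -/
def pickShortest (m : ℤ) (l : List Segment) : Option Segment :=
  (l.filter fun Δ => Δ.2 == m).foldl (fun acc Δ =>
    match acc with
    | none => some Δ
    | some Δ' => if Δ'.1 < Δ.1 then some Δ else some Δ') none

/-- Starting from a current segment `Δ`, greedily build the Mœglin–Waldspurger chain:
at each step choose a shortest segment preceding the current one whose end value is one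
less.  Returns the chosen chain together with the unchosen segments. -/
def pickChain : ℕ → Segment → List Segment → List Segment × List Segment
  | 0, Δ, rest => ([Δ], rest)
  | n + 1, Δ, rest =>
    match pickShortest (Δ.2 - 1) (rest.filter fun Δ' => decide (Precedes Δ' Δ)) with
    | none => ([Δ], rest)
    | some Δ' =>
      let p := pickChain n Δ' (rest.erase Δ')
      (Δ :: p.1, p.2)

/-- One iteration of the Mœglin–Waldspurger algorithm: returns the produced dual
segment `[m, e]` together with the multisegment `α'` left after removing the chosen
end values. -/
def mwIter (l : List Segment) : Option (Segment × List Segment) :=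
  match (l.map fun Δ => Δ.2).max? with
  | none => none
  | some e =>
    match pickShortest e l with
    | none => none
    | some Δe =>
      let p := pickChain l.length Δe (l.erase Δe)
      some ((Δe.2 - ((p.1.length : ℤ) - 1), e), p.2 ++ p.1.filterMap removeEnd)

/-- The total number of integers (with multiplicity) in a list of segments. -/
def totalSize (l : List Segment) : ℕ := (l.map fun Δ => (Δ.2 - Δ.1 + 1).toNat).sum

/-- Fueled iteration of the Mœglin–Waldspurger algorithm. -/
def mwAux : ℕ → List Segment → List Segment
  | 0, _ => []
  | n + 1, l =>
    match mwIter l with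
    | none => []
    | some (Δ', l') => Δ' :: mwAux n l'

/-- The Mœglin–Waldspurger dual `α̃` of a multisegment `α`. -/
noncomputable def dual (α : Multisegment) : Multisegment :=
  (mwAux (totalSize α.toList) α.toList : List Segment)

/-! ### The partial order on multisegments -/

/-- An elementary move on multisegments: either the union–intersection move
(replace distinct overlapping `Δ₁, Δ₂` by `Δ₁ ∩ Δ₂` and `Δ₁ ∪ Δ₂`) or the
conjunction move (replace two disjoint adjacent segments by their union). -/
inductive MoveStep : Multisegment → Multisegment → Prop
  | unionInter (α : Multisegment) (Δ₁ Δ₂ : Segment)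
      (hmeet : max Δ₁.1 Δ₂.1 ≤ min Δ₁.2 Δ₂.2) (hne : Δ₁ ≠ Δ₂) :
      MoveStep (Δ₁ ::ₘ Δ₂ ::ₘ α)
        ((max Δ₁.1 Δ₂.1, min Δ₁.2 Δ₂.2) ::ₘ (min Δ₁.1 Δ₂.1, max Δ₁.2 Δ₂.2) ::ₘ α)
  | conj (α : Multisegment) (Δ₁ Δ₂ : Segment) (h : Δ₂.1 = Δ₁.2 + 1) :
      MoveStep (Δ₁ ::ₘ Δ₂ ::ₘ α) ((Δ₁.1, Δ₂.2) ::ₘ α)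

/-- The partial order `α ≤ β` on multisegments, generated by the elementary moves. -/
def mle (α β : Multisegment) : Prop := Relation.ReflTransGen MoveStep α β

/-- A ladder multisegment: the segments can be listed with strictly increasing
bases and strictly increasing ends. -/
def IsLadder (α : Multisegment) : Prop :=
  ∃ l : List Segment, (l : Multiset Segment) = α ∧
    l.Chain' fun Δ₁ Δ₂ => Δ₁.1 < Δ₂.1 ∧ Δ₁.2 < Δ₂.2

/-- `C_α`: the maximal number of (nonempty) components in a decomposition
`α = ⊔ᵢ αᵢ` satisfying `α̃ = ⊔ᵢ α̃ᵢ`. -/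
noncomputable def Cmax (α : Multisegment) : ℕ :=
  sSup {n | ∃ parts : Multiset Multisegment, Multiset.card parts = n ∧
    (∀ γ ∈ parts, γ ≠ 0) ∧ parts.sum = α ∧ (parts.map dual).sum = dual α}

/-- The simple multisegment `{[b,e], [b+1,e+1], ..., [b+n-1,e+n-1]}`. -/
def simpleMS (b e : ℤ) (n : ℕ) : Multisegment :=
  (Multiset.range n).map fun i => (b + i, e + i)

/-- The symmetric simple multisegment `{[-e,b], [-e+1,b+1], ..., [-b,e]}`. -/
def symmSimple (b e : ℤ) : Multisegment :=
  (Multiset.range (e - b + 1).toNat).map fun i => (-e + i, b + i)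

/- Both moves only lengthen the longest segment: a union contains each of the segments it
replaces, and a conjunction is longer than each of its two pieces as long as both are nonempty.
Nonemptiness is preserved by the moves, so the inequality propagates along any chain of moves. -/

lemma Lmax_cons (Δ : Segment) (α : Multisegment) :
    Lmax (Δ ::ₘ α) = max Δ.len (Lmax α) := by
  simp only [Lmax, Multiset.map_cons, Multiset.fold_cons_left]

namespace MoveStep

variable {α β : Multisegment}

theorem isMultisegment (h : MoveStep α β) (hα : IsMultisegment α) : IsMultisegment β := by
  cases h with
  | unionInter _ Δ₁ Δ₂ hmeet _ =>
    have h₁ := hα Δ₁ (by simp)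
    have h₂ := hα Δ₂ (by simp)
    intro Δ hΔ
    rcases Multiset.mem_cons.1 hΔ with rfl | hΔ
    · exact hmeet
    rcases Multiset.mem_cons.1 hΔ with rfl | hΔ
    · dsimp only; omega
    · exact hα Δ (by simp [hΔ])
  | conj _ Δ₁ Δ₂ hadj =>
    have h₁ := hα Δ₁ (by simp)
    have h₂ := hα Δ₂ (by simp)
    intro Δ hΔ
    rcases Multiset.mem_cons.1 hΔ with rfl | hΔ
    · dsimp only; omega
    · exact hα Δ (by simp [hΔ])

theorem Lmax_le (h : MoveStep α β) (hα : IsMultisegment α) : Lmax α ≤ Lmax β := by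
  cases h with
  | unionInter _ Δ₁ Δ₂ _ _ =>
    simp only [Lmax_cons, Segment.len]
    omega
  | conj _ Δ₁ Δ₂ hadj =>
    have h₁ := hα Δ₁ (by simp)
    have h₂ := hα Δ₂ (by simp)
    simp only [Lmax_cons, Segment.len]
    omega

end MoveStep

/-- if `α ≤ β` then the longest segment of `α` is no longer than the
longest segment of `β`. -/
theorem stmt2 (α β : Multisegment) (hα : IsMultisegment α) (h : mle α β) :
    Lmax α ≤ Lmax β := by
  induction h using Relation.ReflTransGen.head_induction_on with
  | refl => exact le_rfl
  | head hstep _ ih => exact (hstep.Lmax_le hα).trans (ih (hstep.isMultisegment hα))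
end

section
/- For any multisegment α, the number of segments in the dual multisegment α̃ (computed by the Mœglin–Waldspurger algorithm) is at least the length L_α of the longest segment in α, and symmetrically n_α ≥ L_{α̃}. -/
/- Each iteration of the algorithm removes the end value of each segment in a chain of `k`
distinct segments of `α` and outputs a dual segment of length `k`. Hence every segment of `α`
loses at most one unit per iteration, so a segment of length `L` survives `L` iterations and
`α̃` has at least `L_α` segments; and `k ≤ n_α`, while the number of segments never increases,
so no dual segment is longer than `n_α`. -/

section OptionFold

variable {α : Type*} {f : Option α → α → Option α}

theorem List.foldl_option_eq_some_mem (hf : ∀ acc x, f acc x = some x ∨ f acc x = acc) :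
    ∀ {L : List α} {acc : Option α} {a : α}, L.foldl f acc = some a → acc = some a ∨ a ∈ L
  | [], _, _, h => .inl h
  | x :: t, acc, a, h => by
    rcases List.foldl_option_eq_some_mem hf (L := t) (acc := f acc x) h with h' | h'
    · rcases hf acc x with hx | hx
      · exact .inr (by simp_all)
      · exact .inl (hx ▸ h')
    · exact .inr (List.mem_cons_of_mem x h')

theorem List.isSome_foldl_option (hf : ∀ acc x, (f acc x).isSome) :
    ∀ {L : List α} {acc : Option α}, acc.isSome ∨ L ≠ [] → (L.foldl f acc).isSome
  | [], _, h => by simpa using h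
  | x :: t, acc, _ => List.isSome_foldl_option hf (L := t) (.inl (hf acc x))

end OptionFold

section PickShortest

variable {m : ℤ} {l : List Segment} {Δ : Segment}

theorem pickShortest_eq_some (h : pickShortest m l = some Δ) : Δ ∈ l ∧ Δ.2 = m := by
  unfold pickShortest at h
  rcases List.foldl_option_eq_some_mem
    (by rintro (_ | y) x <;> dsimp only <;> (try split_ifs) <;> simp) h with h | h
  · cases h
  · simpa using h

theorem exists_pickShortest_eq_some (h : ∃ Δ ∈ l, Δ.2 = m) : ∃ Δ, pickShortest m l = some Δ := by
  obtain ⟨Δ, hΔ, rfl⟩ := h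
  refine Option.isSome_iff_exists.mp (List.isSome_foldl_option ?_ (.inr ?_))
  · rintro (_ | y) x <;> dsimp only <;> (try split_ifs) <;> simp
  · exact List.ne_nil_of_mem (List.mem_filter.mpr ⟨hΔ, by simp⟩)

end PickShortest

theorem pickChain_fst_ne_nil_and_perm (n : ℕ) (Δ : Segment) (rest : List Segment) :
    (pickChain n Δ rest).1 ≠ [] ∧
      ((pickChain n Δ rest).1 ++ (pickChain n Δ rest).2).Perm (Δ :: rest) := by
  induction n generalizing Δ rest with
  | zero => simp [pickChain]
  | succ n ih =>
    rcases h : pickShortest (Δ.2 - 1) (rest.filter fun Δ' => decide (Precedes Δ' Δ)) with _ | Δ'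
    · simp [pickChain, h]
    · have hΔ' : Δ' ∈ rest := (List.mem_filter.mp (pickShortest_eq_some h).1).1
      simp only [pickChain, h, ne_eq, reduceCtorEq, not_false_eq_true, List.cons_append,
        List.perm_cons, true_and]
      exact (ih Δ' (rest.erase Δ')).2.trans (List.perm_cons_erase hΔ').symm

theorem mwIter_eq_some {l : List Segment} (hl : l ≠ []) :
    ∃ c r : List Segment, c ≠ [] ∧ (c ++ r).Perm l ∧
      ∃ s : Segment, s.len = c.length ∧ mwIter l = some (s, r ++ c.filterMap removeEnd) := by
  obtain ⟨Δ, hΔ⟩ := List.exists_mem_of_ne_nil l hl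
  obtain ⟨e, he⟩ := Option.isSome_iff_exists.mp
    (List.isSome_max?_of_mem (List.mem_map_of_mem (f := Prod.snd) hΔ))
  obtain ⟨Δe, hpick⟩ := exists_pickShortest_eq_some (List.mem_map.mp (List.max?_mem he))
  obtain ⟨hΔe, rfl⟩ := pickShortest_eq_some hpick
  obtain ⟨hne, hperm⟩ := pickChain_fst_ne_nil_and_perm l.length Δe (l.erase Δe)
  refine ⟨_, _, hne, hperm.trans (List.perm_cons_erase hΔe).symm, _, ?_,
    by simp only [mwIter, he, hpick]; rfl⟩
  simp only [Segment.len]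
  ring

theorem mwAux_succ_of_mwIter_eq_some {l l' : List Segment} {s : Segment} (n : ℕ)
    (h : mwIter l = some (s, l')) : mwAux (n + 1) l = s :: mwAux n l' := by
  simp [mwAux, h]

section RemoveEnd

variable {Δ s : Segment}

theorem removeEnd_of_lt (h : Δ.1 < Δ.2) : removeEnd Δ = some (Δ.1, Δ.2 - 1) := by
  simp [removeEnd, Int.le_sub_one_iff.mpr h]

theorem removeEnd_of_le (h : Δ.2 ≤ Δ.1) : removeEnd Δ = none := by
  simp [removeEnd]
  omega

theorem le_of_removeEnd_eq_some (h : removeEnd Δ = some s) : s.1 ≤ s.2 := by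
  unfold removeEnd at h
  split_ifs at h with h'
  cases h
  exact h'

theorem totalSize_filterMap_removeEnd {c : List Segment} (hc : ∀ Δ ∈ c, Δ.1 ≤ Δ.2) :
    totalSize (c.filterMap removeEnd) + c.length = totalSize c := by
  induction c with
  | nil => rfl
  | cons Δ t ih =>
    have ih := ih fun Δ' h => hc Δ' (List.mem_cons_of_mem Δ h)
    have hΔ := hc Δ List.mem_cons_self
    simp only [totalSize, List.map_cons, List.sum_cons, List.length_cons] at ih ⊢
    rcases hΔ.lt_or_eq with hlt | heq
    · simp only [List.filterMap_cons, removeEnd_of_lt hlt, List.map_cons,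
        List.sum_cons] at ih ⊢
      omega
    · simp only [List.filterMap_cons, removeEnd_of_le heq.ge]
      omega

end RemoveEnd

theorem toNat_len_le_totalSize {l : List Segment} {Δ : Segment} (h : Δ ∈ l) :
    Δ.len.toNat ≤ totalSize l :=
  List.le_sum_of_mem (List.mem_map_of_mem h)

theorem len_le_length_mwAux :
    ∀ (fuel : ℕ) {l : List Segment}, (∀ Δ ∈ l, Δ.1 ≤ Δ.2) → totalSize l ≤ fuel →
      ∀ Δ ∈ l, Δ.len ≤ (mwAux fuel l).length
  | 0, l, hl, hfuel, Δ, hΔ => by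
    have := toNat_len_le_totalSize hΔ
    have := hl Δ hΔ
    simp only [Segment.len] at *
    omega
  | n + 1, l, hl, hfuel, Δ, hΔ => by
    obtain ⟨c, r, hc, hperm, s, -, hiter⟩ := mwIter_eq_some (List.ne_nil_of_mem hΔ)
    rw [mwAux_succ_of_mwIter_eq_some n hiter, List.length_cons, Nat.cast_succ]
    have hl' : ∀ Δ ∈ r ++ c.filterMap removeEnd, Δ.1 ≤ Δ.2 := by
      intro Δ hΔ
      rcases List.mem_append.mp hΔ with h | h
      · exact hl Δ (hperm.subset (List.mem_append_right c h))
      · obtain ⟨_, _, h⟩ := List.mem_filterMap.mp h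
        exact le_of_removeEnd_eq_some h
    have hfuel' : totalSize (r ++ c.filterMap removeEnd) ≤ n := by
      have hchain := totalSize_filterMap_removeEnd fun Δ h =>
        hl Δ (hperm.subset (List.mem_append_left r h))
      have hsize := hperm.map (fun Δ : Segment => (Δ.2 - Δ.1 + 1).toNat) |>.sum_eq
      have := List.length_pos_iff.mpr hc
      simp only [totalSize, List.map_append, List.sum_append] at hchain hsize hfuel ⊢
      omega
    have ih := len_le_length_mwAux n hl' hfuel'
    rcases List.mem_append.mp (hperm.symm.subset hΔ) with hΔc | hΔr
    · rcases (hl Δ hΔ).lt_or_eq with hlt | heq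
      · have := ih _ (List.mem_append_right r
          (List.mem_filterMap.mpr ⟨Δ, hΔc, removeEnd_of_lt hlt⟩))
        simp only [Segment.len] at this ⊢
        omega
      · simp only [Segment.len, heq]
        omega
    · have := ih Δ (List.mem_append_left _ hΔr)
      omega

theorem len_le_length_of_mem_mwAux :
    ∀ (fuel : ℕ) {l : List Segment}, ∀ s ∈ mwAux fuel l, s.len ≤ l.length
  | 0, _, s, hs => by simp [mwAux] at hs
  | n + 1, l, s, hs => by
    rcases eq_or_ne l [] with rfl | hl
    · simp [mwAux, mwIter] at hs
    obtain ⟨c, r, -, hperm, s₀, hs₀, hiter⟩ := mwIter_eq_some hl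
    have hlen : c.length + r.length = l.length := by simpa using hperm.length_eq
    rw [mwAux_succ_of_mwIter_eq_some n hiter] at hs
    rcases List.mem_cons.mp hs with rfl | hs
    · omega
    · have ih := len_le_length_of_mem_mwAux n s hs
      have := List.length_filterMap_le removeEnd c
      rw [List.length_append] at ih
      omega

theorem Lmax_le {α : Multisegment} {n : ℤ} (hn : 0 ≤ n) (h : ∀ Δ ∈ α, Δ.len ≤ n) :
    Lmax α ≤ n := by
  induction α using Multiset.induction with
  | empty => simpa [Lmax]
  | cons a s ih =>
    rw [Lmax, Multiset.map_cons, Multiset.fold_cons_left]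
    exact max_le (h a (Multiset.mem_cons_self a s))
      (ih fun Δ hΔ => h Δ (Multiset.mem_cons_of_mem hΔ))

/-- `n_{α̃} ≥ L_α` and `n_α ≥ L_{α̃}`. -/
theorem stmt4 (α : Multisegment) (hα : IsMultisegment α) :
    Lmax α ≤ (nSeg (dual α) : ℤ) ∧ Lmax (dual α) ≤ (nSeg α : ℤ) := by
  have hdual : dual α = ↑(mwAux (totalSize α.toList) α.toList) := rfl
  constructor
  · rw [nSeg, hdual, Multiset.coe_card]
    refine Lmax_le (Int.natCast_nonneg _) fun Δ hΔ => ?_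
    exact len_le_length_mwAux _ (fun Δ h => hα Δ (Multiset.mem_toList.mp h)) le_rfl Δ
      (Multiset.mem_toList.mpr hΔ)
  · rw [nSeg, ← Multiset.length_toList]
    refine Lmax_le (Int.natCast_nonneg _) fun s hs => ?_
    rw [hdual, Multiset.mem_coe] at hs
    exact len_le_length_of_mem_mwAux _ s hs
end

section
/- If α is a simple multisegment, i.e., α = {[b,e], [b+1,e+1], ..., [b+n-1, e+n-1]} for some integers b ≤ e and n ≥ 1, then the number of segments in the dual multisegment α̃ equals the length of the longest segment of α: n_{α̃} = L_α = e - b + 1. -/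
/-! In a simple multisegment `{[b,e], …, [b+n-1,e+n-1]}` each segment precedes the next one
and their ends are consecutive, so the first Mœglin–Waldspurger iteration takes the whole
multisegment as its chain. Removing the end values leaves the simple multisegment
`{[b,e-1], …, [b+n-1,e+n-2]}`, or nothing once `b = e`. Each iteration therefore shortens
every segment by one, and the algorithm stops after exactly `e - b + 1` iterations. -/

theorem List.filter_eq_singleton_of_nodup {α : Type*} [DecidableEq α] {l : List α}
    (hl : l.Nodup) {p : α → Bool} {x : α} (hx : x ∈ l) (hp : ∀ y ∈ l, p y ↔ y = x) :
    l.filter p = [x] := by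
  rw [List.filter_congr (q := fun y => decide (y = x)) fun y hy => by
      rw [Bool.eq_iff_iff, decide_eq_true_iff]; exact hp y hy,
    List.filter_eq, List.count_eq_one_of_mem hl hx, List.replicate_one]

/-- `List.erase` on pairs uses `instBEqProd`, not the `BEq` instance coming from
`DecidableEq` that `Multiset.coe_erase` is stated with. -/
theorem Multiset.coe_erase_prod {α β : Type*} [DecidableEq α] [DecidableEq β]
    (l : List (α × β)) (x : α × β) :
    ((l.erase x : List (α × β)) : Multiset (α × β)) = (l : Multiset (α × β)).erase x := by
  convert (Multiset.coe_erase l x).symm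

theorem pickShortest_of_filter_eq_singleton {m : ℤ} {l : List Segment} {x : Segment}
    (h : l.filter (fun Δ => Δ.2 == m) = [x]) : pickShortest m l = some x := by
  rw [pickShortest, h]
  rfl

theorem pickChain_nil (fuel : ℕ) (Δ : Segment) : pickChain fuel Δ [] = ([Δ], []) := by
  cases fuel <;> rfl

theorem mwAux_nil (fuel : ℕ) : mwAux fuel [] = [] := by
  cases fuel <;> rfl

section SimpleMultisegment

variable {b e : ℤ} {n : ℕ}

theorem simpleMS_eq_map (b e : ℤ) (n : ℕ) :
    simpleMS b e n = (Multiset.range n).map fun i : ℕ => ((b + i, e + i) : Segment) := by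
  -- `simpleMS` coerces `Multiset.range n` to `Multiset ℤ` through the monad lift, a `bind`.
  rw [simpleMS, show ((Multiset.range n : Multiset ℕ) : Multiset ℤ)
      = (Multiset.range n).map (fun i : ℕ => (i : ℤ)) from Multiset.bind_singleton _ _,
    Multiset.map_map]
  rfl

theorem simpleMS_zero (b e : ℤ) : simpleMS b e 0 = 0 := by
  simp [simpleMS_eq_map]

theorem simpleMS_succ (b e : ℤ) (n : ℕ) :
    simpleMS b e (n + 1) = (b + n, e + n) ::ₘ simpleMS b e n := by
  simp [simpleMS_eq_map, Multiset.range_succ]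

theorem mem_simpleMS {Δ : Segment} : Δ ∈ simpleMS b e n ↔ ∃ i < n, Δ = (b + i, e + i) := by
  simp [simpleMS_eq_map, eq_comm]

theorem card_simpleMS (b e : ℤ) (n : ℕ) : Multiset.card (simpleMS b e n) = n := by
  simp [simpleMS_eq_map]

theorem nodup_simpleMS (b e : ℤ) (n : ℕ) : (simpleMS b e n).Nodup := by
  rw [simpleMS_eq_map]
  refine (Multiset.nodup_range n).map fun i j hij => ?_
  simpa using hij

theorem mem_of_coe_eq_simpleMS {l : List Segment} (hl : (l : Multiset Segment) = simpleMS b e n)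
    {Δ : Segment} : Δ ∈ l ↔ ∃ i < n, Δ = (b + i, e + i) := by
  rw [← Multiset.mem_coe, hl, mem_simpleMS]

theorem filter_eq_singleton_of_coe_eq_simpleMS {l : List Segment}
    (hl : (l : Multiset Segment) = simpleMS b e n) {p : Segment → Bool} {i : ℕ} (hi : i < n)
    (hp : ∀ j < n, p (b + j, e + j) ↔ j = i) : l.filter p = [(b + i, e + i)] := by
  refine List.filter_eq_singleton_of_nodup ?_ ((mem_of_coe_eq_simpleMS hl).2 ⟨i, hi, rfl⟩)
    fun y hy => ?_
  · rw [← Multiset.coe_nodup, hl]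
    exact nodup_simpleMS b e n
  · obtain ⟨j, hj, rfl⟩ := (mem_of_coe_eq_simpleMS hl).1 hy
    simp [hp j hj]

theorem erase_coe_eq_simpleMS {l : List Segment}
    (hl : (l : Multiset Segment) = simpleMS b e (n + 1)) :
    ((l.erase (b + n, e + n) : List Segment) : Multiset Segment) = simpleMS b e n := by
  rw [Multiset.coe_erase_prod, hl, simpleMS_succ, Multiset.erase_cons_head]

theorem filterMap_removeEnd_simpleMS_of_lt (h : b < e) :
    (simpleMS b e n).filterMap removeEnd = simpleMS b (e - 1) n := by
  induction n with
  | zero => simp [simpleMS_zero]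
  | succ n ih =>
    rw [simpleMS_succ, simpleMS_succ, Multiset.filterMap_cons_some _ _ _ (by
      rw [removeEnd, if_pos (by simp only; omega)]), ih, sub_add_eq_add_sub]

theorem filterMap_removeEnd_simpleMS_self : (simpleMS b b n).filterMap removeEnd = 0 := by
  induction n with
  | zero => simp [simpleMS_zero]
  | succ n ih =>
    rw [simpleMS_succ, Multiset.filterMap_cons_none _ _ (by
      rw [removeEnd, if_neg (by simp only; omega)]), ih]

theorem pickChain_of_coe_eq_simpleMS (hbe : b ≤ e) {i fuel : ℕ} (hi : i ≤ fuel)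
    {rest : List Segment} (hrest : (rest : Multiset Segment) = simpleMS b e i) :
    ∃ chain, pickChain fuel (b + i, e + i) rest = (chain, []) ∧
      (chain : Multiset Segment) = simpleMS b e (i + 1) := by
  induction i generalizing fuel rest with
  | zero =>
    obtain rfl : rest = [] := by simpa [simpleMS_zero] using hrest
    exact ⟨_, pickChain_nil fuel _, by simp [simpleMS_succ, simpleMS_zero]⟩
  | succ i ih =>
    obtain ⟨fuel, rfl⟩ : ∃ k, fuel = k + 1 := ⟨fuel - 1, by omega⟩
    have hnext : pickShortest (e + ((i + 1 : ℕ) : ℤ) - 1)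
        (rest.filter fun Δ => decide (Precedes Δ (b + (i + 1 : ℕ), e + (i + 1 : ℕ))))
        = some (b + i, e + i) := by
      refine pickShortest_of_filter_eq_singleton ?_
      rw [List.filter_filter]
      refine filter_eq_singleton_of_coe_eq_simpleMS hrest i.lt_succ_self fun j hj => ?_
      simp only [Bool.and_eq_true, beq_iff_eq, decide_eq_true_iff]
      unfold Precedes
      push_cast
      omega
    obtain ⟨chain, hchain, hcoe⟩ := ih (fuel := fuel) (by omega) (erase_coe_eq_simpleMS hrest)
    refine ⟨(b + (i + 1 : ℕ), e + (i + 1 : ℕ)) :: chain, ?_, ?_⟩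
    · rw [pickChain]
      dsimp only
      rw [hnext]
      dsimp only
      rw [hchain]
    · rw [← Multiset.cons_coe, hcoe, simpleMS_succ b e (i + 1)]

theorem mwIter_of_coe_eq_simpleMS (hbe : b ≤ e) (hn : 1 ≤ n) {l : List Segment}
    (hl : (l : Multiset Segment) = simpleMS b e n) :
    ∃ d l', mwIter l = some (d, l') ∧
      (l' : Multiset Segment) = (simpleMS b e n).filterMap removeEnd := by
  obtain ⟨m, rfl⟩ : ∃ m, n = m + 1 := ⟨n - 1, by omega⟩
  have hmax : (l.map fun Δ => Δ.2).max? = some (e + m) := by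
    rw [List.max?_eq_some_iff]
    refine ⟨List.mem_map_of_mem ((mem_of_coe_eq_simpleMS hl).2 ⟨m, m.lt_succ_self, rfl⟩), ?_⟩
    simp only [List.mem_map]
    rintro _ ⟨Δ, hΔ, rfl⟩
    obtain ⟨j, hj, rfl⟩ := (mem_of_coe_eq_simpleMS hl).1 hΔ
    simp only
    omega
  have htop : pickShortest (e + m) l = some (b + m, e + m) :=
    pickShortest_of_filter_eq_singleton <| filter_eq_singleton_of_coe_eq_simpleMS hl
      m.lt_succ_self fun j hj => by simp only [beq_iff_eq]; omega
  have hlen : m ≤ l.length := by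
    have := congrArg Multiset.card hl
    simp only [Multiset.coe_card, card_simpleMS] at this
    omega
  obtain ⟨chain, hchain, hcoe⟩ :=
    pickChain_of_coe_eq_simpleMS hbe hlen (erase_coe_eq_simpleMS hl)
  refine ⟨_, _, by rw [mwIter, hmax]; simp only [htop, hchain]; rfl, ?_⟩
  rw [List.nil_append, ← Multiset.filterMap_coe, hcoe]

theorem length_mwAux_of_coe_eq_simpleMS (hn : 1 ≤ n) (d : ℕ) {fuel : ℕ} (hfuel : d < fuel)
    {l : List Segment} (hl : (l : Multiset Segment) = simpleMS b (b + d) n) :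
    (mwAux fuel l).length = d + 1 := by
  induction d generalizing fuel l with
  | zero =>
    obtain ⟨fuel, rfl⟩ : ∃ k, fuel = k + 1 := ⟨fuel - 1, by omega⟩
    obtain ⟨_, l', hiter, hl'⟩ := mwIter_of_coe_eq_simpleMS (by omega) hn hl
    rw [Nat.cast_zero, add_zero, filterMap_removeEnd_simpleMS_self,
      Multiset.coe_eq_zero] at hl'
    rw [mwAux, hiter, hl']
    simp [mwAux_nil]
  | succ d ih =>
    obtain ⟨fuel, rfl⟩ : ∃ k, fuel = k + 1 := ⟨fuel - 1, by omega⟩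
    obtain ⟨_, l', hiter, hl'⟩ := mwIter_of_coe_eq_simpleMS (by omega) hn hl
    rw [filterMap_removeEnd_simpleMS_of_lt (by omega),
      show b + ((d + 1 : ℕ) : ℤ) - 1 = b + d by push_cast; ring] at hl'
    rw [mwAux, hiter, List.length_cons, ih (by omega) hl']

theorem natCast_nSeg_dual_simpleMS (hbe : b ≤ e) (hn : 1 ≤ n) :
    (nSeg (dual (simpleMS b e n)) : ℤ) = e - b + 1 := by
  obtain ⟨d, rfl⟩ := Int.le.dest hbe
  have hfuel : d < totalSize (simpleMS b (b + d) n).toList := by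
    have hmem : (b, b + d) ∈ simpleMS b (b + d) n :=
      mem_simpleMS.2 ⟨0, hn, by simp⟩
    have := Multiset.le_sum_of_mem (Multiset.mem_map_of_mem
      (fun Δ : Segment => (Δ.2 - Δ.1 + 1).toNat) hmem)
    rw [totalSize, ← Multiset.sum_coe, ← Multiset.map_coe, Multiset.coe_toList]
    omega
  rw [nSeg, dual, Multiset.coe_card,
    length_mwAux_of_coe_eq_simpleMS hn d hfuel (Multiset.coe_toList _)]
  push_cast
  ring

theorem map_len_simpleMS (b e : ℤ) (n : ℕ) :
    (simpleMS b e n).map Segment.len = Multiset.replicate n (e - b + 1) := by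
  rw [Multiset.eq_replicate, Multiset.card_map, card_simpleMS]
  refine ⟨rfl, ?_⟩
  simp only [Multiset.mem_map, mem_simpleMS]
  rintro _ ⟨_, ⟨i, -, rfl⟩, rfl⟩
  simp only [Segment.len]
  ring

theorem fold_max_replicate_succ {c : ℤ} (hc : 0 ≤ c) (m : ℕ) :
    (Multiset.replicate (m + 1) c).fold (fun a b : ℤ => max a b) 0 = c := by
  induction m with
  | zero => rw [zero_add, Multiset.replicate_one, Multiset.fold_singleton, max_eq_left hc]
  | succ m ih => rw [Multiset.replicate_succ, Multiset.fold_cons_left, ih, max_self]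

theorem Lmax_simpleMS (hbe : b ≤ e) (hn : 1 ≤ n) : Lmax (simpleMS b e n) = e - b + 1 := by
  obtain ⟨m, rfl⟩ : ∃ m, n = m + 1 := ⟨n - 1, by omega⟩
  rw [Lmax, map_len_simpleMS, fold_max_replicate_succ (by omega)]

end SimpleMultisegment

/-- for a simple multisegment `α = {[b,e],...,[b+n-1,e+n-1]}` we have
`n_{α̃} = L_α = e - b + 1`. -/
theorem stmt8 (b e : ℤ) (n : ℕ) (hbe : b ≤ e) (hn : 1 ≤ n) :
    (nSeg (dual (simpleMS b e n)) : ℤ) = Lmax (simpleMS b e n) ∧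
      Lmax (simpleMS b e n) = e - b + 1 := by
  rw [Lmax_simpleMS hbe hn]
  exact ⟨natCast_nSeg_dual_simpleMS hbe hn, rfl⟩
end

section
/- If α and β are ladder multisegments with α ≤ β and n_α = n_β (equal numbers of segments), then α = β. -/
/-!
A conjunction move lowers the number of segments, while a union–intersection move preserves
both the multiset of beginnings and the multiset of ends. Hence if `α ≤ β` and `n_α = n_β`,
the two multisegments have the same beginnings and the same ends. A ladder is determined by
these two multisets, since its `i`-th segment pairs the `i`-th smallest beginning with the
`i`-th smallest end.
-/

theorem Multiset.max_cons_min_cons {α : Type*} [LinearOrder α] (a b : α) (s : Multiset α) :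
    max a b ::ₘ min a b ::ₘ s = a ::ₘ b ::ₘ s := by
  rcases le_total a b with hab | hba
  · rw [max_eq_right hab, min_eq_left hab, Multiset.cons_swap]
  · rw [max_eq_left hba, min_eq_right hba]

theorem List.eq_of_map_fst_eq_of_map_snd_eq {α β : Type*} {l₁ l₂ : List (α × β)}
    (h₁ : l₁.map Prod.fst = l₂.map Prod.fst) (h₂ : l₁.map Prod.snd = l₂.map Prod.snd) :
    l₁ = l₂ := by
  rw [← List.zip_unzip l₁, ← List.zip_unzip l₂, List.unzip_fst, List.unzip_snd,
    List.unzip_fst, List.unzip_snd, h₁, h₂]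

namespace MoveStep

variable {γ δ : Multisegment}

theorem card_le (h : MoveStep γ δ) : Multiset.card δ ≤ Multiset.card γ := by
  cases h <;> simp

theorem map_eq_of_card_eq (h : MoveStep γ δ) (hc : Multiset.card δ = Multiset.card γ) :
    δ.map Prod.fst = γ.map Prod.fst ∧ δ.map Prod.snd = γ.map Prod.snd := by
  cases h with
  | unionInter =>
    simp only [Multiset.map_cons]
    exact ⟨Multiset.max_cons_min_cons .., by
      rw [Multiset.cons_swap, Multiset.max_cons_min_cons]⟩
  | conj => simp at hc

end MoveStep

namespace mle

variable {γ δ : Multisegment}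

theorem card_le (h : mle γ δ) : Multiset.card δ ≤ Multiset.card γ := by
  induction h with
  | refl => exact le_rfl
  | tail _ hstep ih => exact hstep.card_le.trans ih

theorem map_eq_of_card_eq (h : mle γ δ) (hc : Multiset.card δ = Multiset.card γ) :
    δ.map Prod.fst = γ.map Prod.fst ∧ δ.map Prod.snd = γ.map Prod.snd := by
  induction h with
  | refl => exact ⟨rfl, rfl⟩
  | @tail ε _ hprev hstep ih =>
    have hε : Multiset.card ε = Multiset.card γ :=
      le_antisymm (card_le hprev) (hc ▸ hstep.card_le)
    obtain ⟨hfst, hsnd⟩ := hstep.map_eq_of_card_eq (hc.trans hε.symm)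
    obtain ⟨hfst', hsnd'⟩ := ih hε
    exact ⟨hfst.trans hfst', hsnd.trans hsnd'⟩

end mle

theorem IsLadder.eq_of_map_fst_eq_of_map_snd_eq {α β : Multisegment}
    (hα : IsLadder α) (hβ : IsLadder β)
    (h₁ : α.map Prod.fst = β.map Prod.fst) (h₂ : α.map Prod.snd = β.map Prod.snd) :
    α = β := by
  obtain ⟨l₁, rfl, hl₁⟩ := hα
  obtain ⟨l₂, rfl, hl₂⟩ := hβ
  simp only [Multiset.map_coe, Multiset.coe_eq_coe] at h₁ h₂
  have sorted_fst {l : List Segment} (hl : l.IsChain fun Δ₁ Δ₂ => Δ₁.1 < Δ₂.1 ∧ Δ₁.2 < Δ₂.2) :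
      (l.map Prod.fst).SortedLE :=
    ((List.isChain_map _).2 (hl.imp fun _ _ h => h.1)).sortedLT.sortedLE
  have sorted_snd {l : List Segment} (hl : l.IsChain fun Δ₁ Δ₂ => Δ₁.1 < Δ₂.1 ∧ Δ₁.2 < Δ₂.2) :
      (l.map Prod.snd).SortedLE :=
    ((List.isChain_map _).2 (hl.imp fun _ _ h => h.2)).sortedLT.sortedLE
  exact congrArg _ <| List.eq_of_map_fst_eq_of_map_snd_eq
    (h₁.eq_of_sortedLE (sorted_fst hl₁) (sorted_fst hl₂))
    (h₂.eq_of_sortedLE (sorted_snd hl₁) (sorted_snd hl₂))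

theorem stmt11_general (α β : Multisegment)
    (hlα : IsLadder α) (hlβ : IsLadder β) (h : mle α β) (hn : nSeg α = nSeg β) :
    α = β := by
  obtain ⟨hfst, hsnd⟩ := h.map_eq_of_card_eq hn.symm
  exact (hlβ.eq_of_map_fst_eq_of_map_snd_eq hlα hfst hsnd).symm

/-- two comparable ladder multisegments with equally many segments
are equal. -/
theorem stmt11 (α β : Multisegment) (hα : IsMultisegment α)
    (hlα : IsLadder α) (hlβ : IsLadder β) (h : mle α β) (hn : nSeg α = nSeg β) :
    α = β :=
  stmt11_general α β hlα hlβ h hn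
end

section
/- If α is any multisegment satisfying n_{α̃} + n_α = S_α + c_α, then α is a ladder multisegment. -/
/-!
Put `f α = S_α + c_α - n_α`. One iteration of the Mœglin–Waldspurger algorithm cuts the end
off every segment of a chain with ends `e, e - 1, …, m` and produces one segment of `α̃`.
A point `z ≠ e` can leave the support only if the one-point segment `[z+1, z+1]` is in the
chain, and a left end of a component can be lost only at `m`, in which case `[m, m]` is in the
chain as well. Since one-point segments disappear, `f` drops by at most one per iteration, so
`f α ≤ n_α̃`. If two segments of `α` are nested, the greedy choice of the chain ensures that
the remainder again contains a nested pair, or that some one-point chain segment lies inside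
the remaining support, and in the latter case `f` does not drop. Hence `f α < n_α̃` for such
`α`; so under the hypothesis no two segments are nested, and sorting by base gives a ladder.
-/

/-- Two equal segments of `α` also count as nested. -/
def Nested (α : Multisegment) : Prop :=
  ∃ Δ Δ' : Segment, {Δ, Δ'} ≤ α ∧ Δ.1 ≤ Δ'.1 ∧ Δ'.2 ≤ Δ.2

lemma Nested.mono {α β : Multisegment} (h : Nested α) (hle : α ≤ β) : Nested β :=
  let ⟨Δ, Δ', hΔ, h1, h2⟩ := h
  ⟨Δ, Δ', hΔ.trans hle, h1, h2⟩

lemma not_nested_zero : ¬ Nested 0 := by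
  rintro ⟨Δ, Δ', h, -⟩
  simpa using Multiset.card_le_card h

lemma nested_of_pair_le {α : Multisegment} {x y : Segment} (h : {x, y} ≤ α)
    (hxy : x.1 ≤ y.1 ∧ y.2 ≤ x.2 ∨ y.1 ≤ x.1 ∧ x.2 ≤ y.2) : Nested α := by
  rcases hxy with hxy | hxy
  · exact ⟨x, y, h, hxy⟩
  · exact ⟨y, x, by rwa [Multiset.pair_comm] at h, hxy⟩

lemma pair_le_add {s t : Multisegment} {x y : Segment} (hx : x ∈ s) (hy : y ∈ t) :
    {x, y} ≤ s + t := by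
  rw [Multiset.insert_eq_cons, ← Multiset.singleton_add]
  exact add_le_add (Multiset.singleton_le.2 hx) (Multiset.singleton_le.2 hy)

lemma pair_le_of_mem_erase {s : Multisegment} {x y : Segment} (hx : x ∈ s)
    (hy : y ∈ s.erase x) : {x, y} ≤ s := by
  rw [← Multiset.cons_erase hx]
  exact Multiset.cons_le_cons x (Multiset.singleton_le.2 hy)

lemma pair_le_add_cases {s t : Multisegment} {x y : Segment} (h : {x, y} ≤ s + t) :
    {x, y} ≤ s ∨ {x, y} ≤ t ∨ (x ∈ s ∧ y ∈ t) ∨ (y ∈ s ∧ x ∈ t) := by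
  have hx : x ∈ s + t := Multiset.mem_of_le h (by simp)
  have hy : y ∈ (s + t).erase x := by
    simpa using Multiset.mem_of_le (Multiset.erase_le_erase x h) (by simp)
  rcases Multiset.mem_add.1 hx with hxs | hxt
  · rw [Multiset.erase_add_left_pos t hxs, Multiset.mem_add] at hy
    rcases hy with hys | hyt
    · exact .inl (pair_le_of_mem_erase hxs hys)
    · exact .inr (.inr (.inl ⟨hxs, hyt⟩))
  · rw [Multiset.erase_add_right_pos s hxt, Multiset.mem_add] at hy
    rcases hy with hys | hyt
    · exact .inr (.inr (.inr ⟨hys, hxt⟩))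
    · exact .inr (.inl (pair_le_of_mem_erase hxt hyt))

lemma pairwise_of_not_nested {l : List Segment} (h : ¬ Nested l) :
    l.Pairwise fun a b => a.1 < b.1 ∧ a.2 < b.2 ∨ b.1 < a.1 ∧ b.2 < a.2 := by
  rw [List.pairwise_iff_forall_sublist]
  intro a b hab
  have hle : {a, b} ≤ (l : Multisegment) := Multiset.coe_le.2 hab.subperm
  by_contra hc
  exact h (nested_of_pair_le hle (by omega))

theorem isLadder_of_not_nested {α : Multisegment} (h : ¬ Nested α) : IsLadder α := by
  let l := α.toList.mergeSort fun a b => decide (a.1 ≤ b.1)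
  have hl : (l : Multisegment) = α := by
    rw [Multiset.coe_eq_coe.2 (List.mergeSort_perm _ _), Multiset.coe_toList]
  have hsorted : l.Pairwise fun a b => decide (a.1 ≤ b.1) = true :=
    List.pairwise_mergeSort (fun a b c hab hbc => by simp only [decide_eq_true_eq] at *; omega)
      (fun a b => by simpa using le_total a.1 b.1) _
  refine ⟨l, hl, (((pairwise_of_not_nested (hl ▸ h)).and hsorted).imp ?_).isChain⟩
  rintro a b ⟨hab | hab, hle⟩
  · exact hab
  · simp only [decide_eq_true_eq] at hle
    omega

section LeftEnds

open Finset

def leftEnds (s : Finset ℤ) : Finset ℤ := s.filter fun x => x - 1 ∉ s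

lemma card_leftEnds_le {s s' : Finset ℤ} (hs : s' ⊆ s) :
    (leftEnds s).card ≤ (leftEnds s').card + ((s \ s').filter fun z => z - 1 ∉ s).card := by
  refine (card_le_card fun z hz => ?_).trans (card_union_le _ _)
  simp only [leftEnds, mem_filter, mem_union, mem_sdiff] at hz ⊢
  by_cases hz' : z ∈ s'
  · exact .inl ⟨hz', fun h => hz.2 (hs h)⟩
  · exact .inr ⟨⟨hz.1, hz'⟩, hz.2⟩

lemma card_add_card_le_of_add_one_mem {X W T : Finset ℤ} (hX : ∀ z ∈ X, z + 1 ∈ T)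
    (hW : W ⊆ T) (hXW : ∀ w ∈ W, w - 1 ∉ X) : X.card + W.card ≤ T.card := by
  have hdisj : Disjoint (X.image (· + 1)) W := by
    refine disjoint_left.2 fun w hw hwW => hXW w hwW ?_
    obtain ⟨z, hz, rfl⟩ := mem_image.1 hw
    simpa using hz
  calc X.card + W.card = (X.image (· + 1) ∪ W).card := by
        rw [card_union_of_disjoint hdisj, card_image_of_injective X (add_left_injective 1)]
    _ ≤ T.card := card_le_card (union_subset (image_subset_iff.2 hX) hW)

variable {s s' T : Finset ℤ} {m e : ℤ}

lemma filter_sdiff_subset_singleton (hIcc : Icc m e ⊆ s) (hD : s \ s' ⊆ Icc m e) :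
    ((s \ s').filter fun z => z - 1 ∉ s) ⊆ {m} := by
  intro z hz
  rw [mem_filter] at hz
  have := mem_Icc.1 (hD hz.1)
  by_contra hzm
  rw [mem_singleton] at hzm
  exact hz.2 (hIcc (mem_Icc.2 ⟨by omega, by omega⟩))

/- In the application, `s` and `s'` are the supports before and after one step of the
algorithm, and `T` is the set of ends of the one-point segments that the step deletes. -/
variable (hIcc : Icc m e ⊆ s) (hD : s \ s' ⊆ Icc m e)
  (hT : ∀ z ∈ s \ s', z ≠ e → z + 1 ∈ T) (hm : m ∈ s \ s' → m - 1 ∉ s → m ∈ T)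
include hIcc hD hT hm

lemma card_erase_add_card_filter_add_card_le {W : Finset ℤ} (hWT : W ⊆ T)
    (hWD : ∀ w ∈ W, w - 1 ∉ s \ s') (hWm : m ∉ W) :
    ((s \ s').erase e).card + ((s \ s').filter fun z => z - 1 ∉ s).card + W.card ≤ T.card := by
  set B := (s \ s').filter fun z => z - 1 ∉ s
  have hBm : ∀ w ∈ B, w = m := fun w hw =>
    mem_singleton.1 (filter_sdiff_subset_singleton hIcc hD hw)
  have hBT : B ⊆ T := fun z hz => by
    obtain rfl := hBm z hz
    exact hm (mem_filter.1 hz).1 (mem_filter.1 hz).2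
  have hBW : Disjoint B W := disjoint_left.2 fun w hw hwW => hWm (hBm w hw ▸ hwW)
  rw [add_assoc, ← card_union_of_disjoint hBW]
  refine card_add_card_le_of_add_one_mem
    (fun z hz => hT z (mem_of_mem_erase hz) (ne_of_mem_erase hz)) (union_subset hBT hWT) ?_
  intro w hw hw'
  rcases mem_union.1 hw with hw | hw
  · have := mem_Icc.1 (hD (mem_of_mem_erase hw'))
    have := hBm w hw
    omega
  · exact hWD w hw (mem_of_mem_erase hw')

lemma card_add_card_leftEnds_le (hs : s' ⊆ s) :
    s.card + (leftEnds s).card ≤ s'.card + (leftEnds s').card + T.card + 1 := by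
  have := card_erase_add_card_filter_add_card_le hIcc hD hT hm (empty_subset T) (by simp)
    (notMem_empty m)
  have := pred_card_le_card_erase (s := s \ s') (a := e)
  have := card_leftEnds_le hs
  have := card_sdiff_add_card_eq_card hs
  simp only [card_empty] at *
  omega

lemma card_add_card_leftEnds_le_of_mem (hs : s' ⊆ s) {y : ℤ} (hy : y ∈ Icc m e) (hys : y ∈ s')
    (hyT : y ≠ e → y + 1 ∈ T) :
    s.card + (leftEnds s).card ≤ s'.card + (leftEnds s').card + T.card := by
  have hyD : y ∉ s \ s' := fun h => (mem_sdiff.1 h).2 hys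
  have := card_leftEnds_le hs
  have := card_sdiff_add_card_eq_card hs
  obtain rfl | hye := eq_or_ne y e
  · have := card_erase_add_card_filter_add_card_le hIcc hD hT hm (empty_subset T) (by simp)
      (notMem_empty m)
    rw [erase_eq_of_notMem hyD] at this
    simp only [card_empty] at *
    omega
  · have := card_erase_add_card_filter_add_card_le hIcc hD hT hm
      (singleton_subset_iff.2 (hyT hye)) (by simpa using hyD)
      (by rw [mem_singleton]; have := mem_Icc.1 hy; omega)
    have := pred_card_le_card_erase (s := s \ s') (a := e)
    simp only [card_singleton] at *
    omega

end LeftEnds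

lemma comp_eq_card_leftEnds (α : Multisegment) : comp α = (leftEnds (supp α)).card := rfl

lemma mem_supp {α : Multisegment} {z : ℤ} : z ∈ supp α ↔ ∃ Δ ∈ α, Δ.1 ≤ z ∧ z ≤ Δ.2 := by
  simp [supp]

lemma supp_add (s t : Multisegment) : supp (s + t) = supp s ∪ supp t := by
  simp only [supp, Multiset.toFinset_add, Finset.union_biUnion]

lemma removeEnd_eq_some {Δ Δ' : Segment} :
    removeEnd Δ = some Δ' ↔ Δ.1 < Δ.2 ∧ Δ' = (Δ.1, Δ.2 - 1) := by
  unfold removeEnd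
  split_ifs with h
  · simp only [Option.some.injEq]
    constructor
    · rintro rfl; exact ⟨by omega, rfl⟩
    · rintro ⟨-, rfl⟩; rfl
  · simp only [false_iff, not_and]
    omega

lemma removeEnd_eq_none {Δ : Segment} : removeEnd Δ = none ↔ Δ.2 ≤ Δ.1 := by
  unfold removeEnd
  split_ifs <;> simp only [true_iff, false_iff] <;> omega

lemma mem_filterMap_removeEnd {s : Multisegment} {Δ' : Segment} :
    Δ' ∈ s.filterMap removeEnd ↔ ∃ Δ ∈ s, Δ.1 < Δ.2 ∧ Δ' = (Δ.1, Δ.2 - 1) := by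
  simp only [Multiset.mem_filterMap, removeEnd_eq_some]

lemma mem_supp_filterMap_removeEnd {s : Multisegment} {z : ℤ} :
    z ∈ supp (s.filterMap removeEnd) ↔ ∃ Δ ∈ s, Δ.1 ≤ z ∧ z < Δ.2 := by
  simp only [mem_supp, mem_filterMap_removeEnd]
  constructor
  · rintro ⟨_, ⟨Δ, hΔ, -, rfl⟩, h1, h2⟩
    exact ⟨Δ, hΔ, h1, by dsimp only at h2; omega⟩
  · rintro ⟨Δ, hΔ, h1, h2⟩
    exact ⟨_, ⟨Δ, hΔ, by omega, rfl⟩, h1, by dsimp only; omega⟩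

lemma card_filterMap_removeEnd (s : Multisegment) :
    Multiset.card (s.filterMap removeEnd) + Multiset.card (s.filter fun Δ => Δ.2 ≤ Δ.1)
      = Multiset.card s := by
  induction s using Multiset.induction_on with
  | empty => rfl
  | cons Δ s ih =>
    by_cases h : Δ.2 ≤ Δ.1
    · rw [Multiset.filterMap_cons_none _ _ (removeEnd_eq_none.2 h)]
      simp only [h, Multiset.filter_cons_of_pos, Multiset.card_cons]
      omega
    · rw [Multiset.filterMap_cons_some _ _ _ (removeEnd_eq_some.2 ⟨by omega, rfl⟩)]
      simp only [h, not_false_eq_true, Multiset.filter_cons_of_neg, Multiset.card_cons]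
      omega

/-- `ch` is the chain cut by one step of the Mœglin–Waldspurger algorithm, with ends
`e, e - 1, …, m`, and `r` is the rest. Each link is greedy: the successor of `P` in the chain
has the largest base among the segments that could have been chosen, so no segment of `r`
with the same end and a smaller base than `P` has a larger base. -/
structure IsMWChain (ch r : Multisegment) (m e : ℤ) : Prop where
  ends : ch.map Prod.snd = (Finset.Icc m e).val
  bases : ∀ P ∈ ch, ∀ Q ∈ ch, Q.2 < P.2 → Q.1 < P.1
  greedy : ∀ P ∈ ch, ∀ Q ∈ ch, P.2 = Q.2 + 1 → ∀ x ∈ r, x.2 = Q.2 → x.1 < P.1 → x.1 ≤ Q.1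

namespace IsMWChain

variable {ch r : Multisegment} {m e : ℤ}

lemma snd_mem_Icc (h : IsMWChain ch r m e) {Δ : Segment} (hΔ : Δ ∈ ch) :
    Δ.2 ∈ Finset.Icc m e := by
  rw [← Finset.mem_val, ← h.ends]
  exact Multiset.mem_map_of_mem _ hΔ

lemma exists_snd_eq (h : IsMWChain ch r m e) {z : ℤ} (hz : z ∈ Finset.Icc m e) :
    ∃ Δ ∈ ch, Δ.2 = z := by
  rw [← Finset.mem_val, ← h.ends] at hz
  exact Multiset.mem_map.1 hz

lemma nodup_ends (h : IsMWChain ch r m e) : (ch.map Prod.snd).Nodup :=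
  h.ends ▸ (Finset.Icc m e).nodup

lemma eq_of_snd_eq (h : IsMWChain ch r m e) {P Q : Segment} (hP : P ∈ ch) (hQ : Q ∈ ch)
    (hPQ : P.2 = Q.2) : P = Q :=
  Multiset.inj_on_of_nodup_map h.nodup_ends P hP Q hQ hPQ

lemma not_nested (h : IsMWChain ch r m e) : ¬ Nested ch := by
  rintro ⟨P, Q, hle, h1, h2⟩
  have hP : P ∈ ch := Multiset.mem_of_le hle (by simp)
  have hQ : Q ∈ ch := Multiset.mem_of_le hle (by simp)
  rcases h2.lt_or_eq with h2 | h2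
  · exact absurd (h.bases P hP Q hQ h2) (not_lt.2 h1)
  · have := Multiset.nodup_of_le (Multiset.map_le_map (f := Prod.snd) hle) h.nodup_ends
    simp [h2] at this

lemma singleton (Δ : Segment) (r : Multisegment) : IsMWChain {Δ} r Δ.2 Δ.2 where
  ends := by simp
  bases := by simp
  greedy := by simp

lemma cons (h : IsMWChain ch r m e) {Δ Δ' : Segment} (hΔ' : Δ' ∈ ch) (he : Δ'.2 = e)
    (hend : Δ.2 = e + 1) (hbase : Δ'.1 < Δ.1)
    (hmax : ∀ x ∈ r, x.2 = e → x.1 < Δ.1 → x.1 ≤ Δ'.1) :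
    IsMWChain (Δ ::ₘ ch) r m (e + 1) := by
  have hle : ∀ Q ∈ ch, Q.1 ≤ Δ'.1 ∧ Q.2 ≤ e := fun Q hQ => by
    have hQe := (Finset.mem_Icc.1 (h.snd_mem_Icc hQ)).2
    rcases hQe.lt_or_eq with hlt | heq
    · exact ⟨(h.bases Δ' hΔ' Q hQ (he ▸ hlt)).le, hQe⟩
    · exact ⟨(h.eq_of_snd_eq hQ hΔ' (heq.trans he.symm)).le.1, hQe⟩
  have hme : m ≤ e := (Finset.mem_Icc.1 (h.snd_mem_Icc hΔ')).1.trans he.le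
  refine ⟨?_, ?_, ?_⟩
  · rw [Multiset.map_cons, h.ends, hend, ← Finset.insert_val_of_notMem (by simp),
      Finset.insert_Icc_right_eq_Icc_add_one (by omega)]
  · simp only [Multiset.mem_cons]
    rintro P (rfl | hP) Q (rfl | hQ) hQP
    · omega
    · have := hle Q hQ; omega
    · have := hle P hP; omega
    · exact h.bases P hP Q hQ hQP
  · simp only [Multiset.mem_cons]
    rintro P (rfl | hP) Q (rfl | hQ) hPQ x hx hxQ hxP
    · omega
    · obtain rfl := h.eq_of_snd_eq hQ hΔ' (by omega)
      exact hmax x hx (by omega) hxP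
    · have := hle P hP; omega
    · exact h.greedy P hP Q hQ hPQ x hx hxQ hxP

end IsMWChain

structure IsMWStep (ch r : Multisegment) (m e : ℤ) : Prop extends IsMWChain ch r m e where
  valid : IsMultisegment (ch + r)
  top : ∀ Q ∈ ch, Q.2 = e → ∀ x ∈ r, x.2 = e → x.1 ≤ Q.1

/-- Ends of the segments that `removeEnd` deletes: for genuine segments, the one-point ones. -/
def singletonEnds (α : Multisegment) : Finset ℤ :=
  ((α.filter fun Δ => Δ.2 ≤ Δ.1).map Prod.snd).toFinset

lemma mem_singletonEnds {α : Multisegment} {y : ℤ} (hy : (y, y) ∈ α) : y ∈ singletonEnds α := by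
  simp only [singletonEnds, Multiset.mem_toFinset, Multiset.mem_map, Multiset.mem_filter]
  exact ⟨(y, y), ⟨hy, le_rfl⟩, rfl⟩

noncomputable def dualLowerBound (α : Multisegment) : ℤ := Ssize α + comp α - nSeg α

lemma dualLowerBound_zero : dualLowerBound 0 = 0 := by
  simp [dualLowerBound, Ssize, comp, supp, nSeg]

lemma nested_add_filterMap_removeEnd {ch r : Multisegment} {x Δ : Segment} (hx : x ∈ r)
    (hΔ : Δ ∈ ch) (hlt : Δ.1 < Δ.2)
    (hxΔ : x.1 ≤ Δ.1 ∧ Δ.2 - 1 ≤ x.2 ∨ Δ.1 ≤ x.1 ∧ x.2 ≤ Δ.2 - 1) :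
    Nested (r + ch.filterMap removeEnd) :=
  nested_of_pair_le (pair_le_add hx (mem_filterMap_removeEnd.2 ⟨Δ, hΔ, hlt, rfl⟩)) hxΔ

lemma supp_reduce_subset (ch r : Multisegment) :
    supp (r + ch.filterMap removeEnd) ⊆ supp (ch + r) := by
  intro z hz
  rw [supp_add, Finset.mem_union, mem_supp_filterMap_removeEnd] at hz
  rw [supp_add, Finset.mem_union, mem_supp]
  rcases hz with hz | ⟨Δ, hΔ, h1, h2⟩
  · exact .inr hz
  · exact .inl ⟨Δ, hΔ, h1, h2.le⟩

namespace IsMWStep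

variable {ch r : Multisegment} {m e : ℤ} (h : IsMWStep ch r m e)
include h

lemma valid_reduce : IsMultisegment (r + ch.filterMap removeEnd) := by
  intro Δ hΔ
  rcases Multiset.mem_add.1 hΔ with hΔ | hΔ
  · exact h.valid Δ (Multiset.mem_add.2 (.inr hΔ))
  · obtain ⟨Δ₀, -, hlt, rfl⟩ := mem_filterMap_removeEnd.1 hΔ
    dsimp only
    omega

lemma valid_chain {Δ : Segment} (hΔ : Δ ∈ ch) : Δ.1 ≤ Δ.2 :=
  h.valid Δ (Multiset.mem_add.2 (.inl hΔ))

lemma le_or_exists {Q x : Segment} (hQ : Q ∈ ch) (hx : x ∈ r) (hxQ : x.2 = Q.2) :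
    x.1 ≤ Q.1 ∨ ∃ P ∈ ch, P.2 = Q.2 + 1 ∧ P.1 ≤ x.1 := by
  obtain rfl | hQe := eq_or_ne Q.2 e
  · exact .inl (h.top Q hQ rfl x hx hxQ)
  obtain ⟨P, hP, hPQ⟩ := h.exists_snd_eq (z := Q.2 + 1) (by
    have := Finset.mem_Icc.1 (h.snd_mem_Icc hQ); simp only [Finset.mem_Icc]; omega)
  by_cases hxP : x.1 < P.1
  · exact .inl (h.greedy P hP Q hQ hPQ x hx hxQ hxP)
  · exact .inr ⟨P, hP, hPQ, not_lt.1 hxP⟩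

lemma Icc_subset_supp : Finset.Icc m e ⊆ supp (ch + r) := by
  intro z hz
  obtain ⟨Δ, hΔ, rfl⟩ := h.exists_snd_eq hz
  exact mem_supp.2 ⟨Δ, Multiset.mem_add.2 (.inl hΔ), h.valid_chain hΔ, le_rfl⟩

lemma sdiff_subset_Icc :
    supp (ch + r) \ supp (r + ch.filterMap removeEnd) ⊆ Finset.Icc m e := by
  intro z hz
  simp only [Finset.mem_sdiff, supp_add, Finset.mem_union, mem_supp_filterMap_removeEnd,
    not_or, not_exists, not_and, not_lt] at hz
  obtain ⟨hz | hz, hzr, hzch⟩ := hz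
  · obtain ⟨Δ, hΔ, h1, h2⟩ := mem_supp.1 hz
    obtain rfl : z = Δ.2 := le_antisymm h2 (hzch Δ hΔ h1)
    exact h.snd_mem_Icc hΔ
  · exact absurd hz hzr

lemma add_one_mem_of_mem_sdiff {z : ℤ}
    (hz : z ∈ supp (ch + r) \ supp (r + ch.filterMap removeEnd)) (hze : z ≠ e) :
    (z + 1, z + 1) ∈ ch := by
  have hzI := Finset.mem_Icc.1 (h.sdiff_subset_Icc hz)
  obtain ⟨P, hP, hPz⟩ := h.exists_snd_eq (z := z + 1) (Finset.mem_Icc.2 ⟨by omega, by omega⟩)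
  have hPv := h.valid_chain hP
  have hP1 : z + 1 ≤ P.1 := by
    by_contra hlt
    refine (Finset.mem_sdiff.1 hz).2 ?_
    rw [supp_add]
    exact Finset.mem_union_right _ (mem_supp_filterMap_removeEnd.2 ⟨P, hP, by omega, by omega⟩)
  rwa [show (z + 1, z + 1) = P from Prod.ext (by omega) hPz.symm]

lemma bottom_mem (hm : m ∈ supp (ch + r) \ supp (r + ch.filterMap removeEnd))
    (hm1 : m - 1 ∉ supp (ch + r)) : (m, m) ∈ ch := by
  obtain ⟨P, hP, hPm⟩ := h.exists_snd_eq (z := m)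
    (Finset.mem_Icc.2 ⟨le_rfl, (Finset.mem_Icc.1 (h.sdiff_subset_Icc hm)).2⟩)
  have hPv := h.valid_chain hP
  have hP1 : m ≤ P.1 := by
    by_contra hlt
    exact hm1 (mem_supp.2 ⟨P, Multiset.mem_add.2 (.inl hP), by omega, by omega⟩)
  rwa [show (m, m) = P from Prod.ext (by omega) hPm.symm]

lemma add_one_mem_of_singleton_mem {y : ℤ} (hy : (y, y) ∈ ch) (hye : y ≠ e) :
    (y + 1, y + 1) ∈ ch := by
  have hyI := Finset.mem_Icc.1 (h.snd_mem_Icc hy)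
  obtain ⟨P, hP, hPy⟩ := h.exists_snd_eq (z := y + 1) (Finset.mem_Icc.2 ⟨by omega, by omega⟩)
  have hPv := h.valid_chain hP
  have hyP := h.bases P hP _ hy (by dsimp only; omega)
  rwa [show (y + 1, y + 1) = P from Prod.ext (by dsimp only at hyP; omega) hPy.symm]

lemma nSeg_eq :
    nSeg (ch + r) = nSeg (r + ch.filterMap removeEnd) + (singletonEnds ch).card := by
  have hnodup : ((ch.filter fun Δ => Δ.2 ≤ Δ.1).map Prod.snd).Nodup :=
    Multiset.nodup_of_le (Multiset.map_le_map (Multiset.filter_le _ _)) h.nodup_ends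
  rw [singletonEnds, Multiset.toFinset_card_of_nodup hnodup, Multiset.card_map]
  have := card_filterMap_removeEnd ch
  simp only [nSeg, Multiset.card_add]
  omega

lemma dualLowerBound_le :
    dualLowerBound (ch + r) ≤ dualLowerBound (r + ch.filterMap removeEnd) + 1 := by
  have := card_add_card_leftEnds_le h.Icc_subset_supp h.sdiff_subset_Icc
    (fun z hz hze => mem_singletonEnds (h.add_one_mem_of_mem_sdiff hz hze))
    (fun hm hm1 => mem_singletonEnds (h.bottom_mem hm hm1)) (supp_reduce_subset ch r)
  have := h.nSeg_eq
  simp only [dualLowerBound, Ssize, comp_eq_card_leftEnds]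
  omega

lemma dualLowerBound_le_of_singleton_mem {y : ℤ} (hy : (y, y) ∈ ch) (hyr : y ∈ supp r) :
    dualLowerBound (ch + r) ≤ dualLowerBound (r + ch.filterMap removeEnd) := by
  have := card_add_card_leftEnds_le_of_mem h.Icc_subset_supp h.sdiff_subset_Icc
    (fun z hz hze => mem_singletonEnds (h.add_one_mem_of_mem_sdiff hz hze))
    (fun hm hm1 => mem_singletonEnds (h.bottom_mem hm hm1)) (supp_reduce_subset ch r)
    (h.snd_mem_Icc hy)
    (by rw [supp_add]; exact Finset.mem_union_left _ hyr)
    (fun hye => mem_singletonEnds (h.add_one_mem_of_singleton_mem hy hye))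
  have := h.nSeg_eq
  simp only [dualLowerBound, Ssize, comp_eq_card_leftEnds]
  omega

lemma nested_or_of_rest_le_chain {x Δ : Segment} (hx : x ∈ r) (hΔ : Δ ∈ ch)
    (h1 : Δ.1 ≤ x.1) (h2 : x.2 ≤ Δ.2) :
    Nested (r + ch.filterMap removeEnd) ∨ ∃ y, (y, y) ∈ ch ∧ y ∈ supp r := by
  have hxv := h.valid x (Multiset.mem_add.2 (.inr hx))
  rcases h2.lt_or_eq with h2 | h2
  · exact .inl (nested_add_filterMap_removeEnd hx hΔ (by omega) (.inr ⟨h1, by omega⟩))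
  rcases h.le_or_exists hΔ hx h2 with hle | ⟨P, hP, hPΔ, hPx⟩
  · by_cases hΔs : Δ.1 = Δ.2
    · refine .inr ⟨Δ.2, by rwa [show (Δ.2, Δ.2) = Δ from Prod.ext hΔs.symm rfl], ?_⟩
      exact mem_supp.2 ⟨x, hx, by omega, by omega⟩
    · exact .inl (nested_add_filterMap_removeEnd hx hΔ (by omega) (.inl ⟨by omega, by omega⟩))
  · exact .inl (nested_add_filterMap_removeEnd hx hP (by omega) (.inr ⟨hPx, by omega⟩))

lemma nested_or_of_chain_le_rest {x Δ : Segment} (hx : x ∈ r) (hΔ : Δ ∈ ch)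
    (h1 : x.1 ≤ Δ.1) (h2 : Δ.2 ≤ x.2) :
    Nested (r + ch.filterMap removeEnd) ∨ ∃ y, (y, y) ∈ ch ∧ y ∈ supp r := by
  have hΔv := h.valid_chain hΔ
  by_cases hΔs : Δ.1 = Δ.2
  · refine .inr ⟨Δ.2, by rwa [show (Δ.2, Δ.2) = Δ from Prod.ext hΔs.symm rfl], ?_⟩
    exact mem_supp.2 ⟨x, hx, by omega, h2⟩
  · exact .inl (nested_add_filterMap_removeEnd hx hΔ (by omega) (.inl ⟨h1, by omega⟩))

lemma nested_or (hN : Nested (ch + r)) :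
    Nested (r + ch.filterMap removeEnd) ∨ ∃ y, (y, y) ∈ ch ∧ y ∈ supp r := by
  obtain ⟨Δ, Δ', hle, h1, h2⟩ := hN
  rcases pair_le_add_cases hle with hch | hr | ⟨hΔ, hΔ'⟩ | ⟨hΔ', hΔ⟩
  · exact absurd ⟨Δ, Δ', hch, h1, h2⟩ h.not_nested
  · exact .inl (Nested.mono ⟨Δ, Δ', hr, h1, h2⟩ (Multiset.le_add_right _ _))
  · exact h.nested_or_of_rest_le_chain hΔ' hΔ h1 h2
  · exact h.nested_or_of_chain_le_rest hΔ hΔ' h1 h2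

end IsMWStep

lemma pickShortest_eq_argmax (m : ℤ) (l : List Segment) :
    pickShortest m l = (l.filter fun Δ => Δ.2 == m).argmax Prod.fst := by
  unfold pickShortest List.argmax
  congr 1
  funext acc Δ
  cases acc <;> rfl

lemma pickShortest_spec {m : ℤ} {l : List Segment} {Δ : Segment}
    (h : pickShortest m l = some Δ) : Δ ∈ l ∧ Δ.2 = m ∧ ∀ x ∈ l, x.2 = m → x.1 ≤ Δ.1 := by
  rw [pickShortest_eq_argmax] at h
  have hmem := List.mem_filter.1 (List.argmax_mem h)
  refine ⟨hmem.1, by simpa using hmem.2, fun x hx hxm => ?_⟩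
  exact List.le_of_mem_argmax (List.mem_filter.2 ⟨hx, by simpa using hxm⟩) h

lemma pickShortest_ne_none {m : ℤ} {l : List Segment} {x : Segment} (hx : x ∈ l)
    (hxm : x.2 = m) : pickShortest m l ≠ none := by
  rw [pickShortest_eq_argmax, Ne, List.argmax_eq_none, List.filter_eq_nil_iff]
  exact fun h => h x hx (by simpa using hxm)

/-- `pickChain` erases with the componentwise `BEq` instance on `ℤ × ℤ`, which is not
syntactically the one `Multiset.coe_erase` expects. -/
lemma coe_erase_segment (l : List Segment) (a : Segment) :
    ((l.erase a : List Segment) : Multisegment) = (l : Multisegment).erase a := by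
  rw [Multiset.coe_erase]
  congr
  exact lawful_beq_subsingleton _ _

lemma pickChain_spec (n : ℕ) (Δ : Segment) (rest : List Segment) (hΔ : Δ.1 ≤ Δ.2)
    (hrest : IsMultisegment rest) :
    ∃ m, ((pickChain n Δ rest).1 : Multisegment) + (pickChain n Δ rest).2 = Δ ::ₘ rest ∧
      Δ ∈ (pickChain n Δ rest).1 ∧
      IsMWChain (pickChain n Δ rest).1 (pickChain n Δ rest).2 m Δ.2 := by
  induction n generalizing Δ rest with
  | zero => exact ⟨Δ.2, rfl, by simp [pickChain], IsMWChain.singleton Δ _⟩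
  | succ n ih =>
    unfold pickChain
    split
    · exact ⟨Δ.2, rfl, by simp, IsMWChain.singleton Δ _⟩
    · rename_i Δ' hps
      obtain ⟨hΔ'mem, hΔ'2, hΔ'max⟩ := pickShortest_spec hps
      obtain ⟨hΔ'rest, hprec⟩ := List.mem_filter.1 hΔ'mem
      replace hprec : Precedes Δ' Δ := of_decide_eq_true hprec
      have hΔ'rest' : Δ' ∈ (rest : Multisegment) := hΔ'rest
      obtain ⟨m, hsum, hmem, hchain⟩ := ih Δ' (rest.erase Δ') (hrest Δ' hΔ'rest)
        fun x hx => hrest x (List.mem_of_mem_erase hx)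
      rw [coe_erase_segment, Multiset.cons_erase hΔ'rest'] at hsum
      dsimp only
      refine ⟨m, ?_, List.mem_cons_self, ?_⟩
      · rw [← Multiset.cons_coe, Multiset.cons_add, hsum]
      have hmax : ∀ x ∈ ((pickChain n Δ' (rest.erase Δ')).2 : Multisegment),
          x.2 = Δ'.2 → x.1 < Δ.1 → x.1 ≤ Δ'.1 := by
        intro x hx hx2 hx1
        have hx' : x ∈ (rest : Multisegment) := hsum ▸ Multiset.mem_add.2 (.inr hx)
        have hxv := hrest x hx'
        exact hΔ'max x (List.mem_filter.2 ⟨hx', decide_eq_true ⟨hx1, by omega, by omega⟩⟩)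
          (by omega)
      have := hchain.cons hmem rfl (by omega) hprec.1 hmax
      rwa [hΔ'2, sub_add_cancel] at this

lemma totalSize_eq_sum (l : List Segment) :
    totalSize l = ((l : Multisegment).map fun Δ => Δ.len.toNat).sum := by
  simp [totalSize, Segment.len]

lemma sum_filterMap_removeEnd_add_card {s : Multisegment} (hs : IsMultisegment s) :
    ((s.filterMap removeEnd).map fun Δ => Δ.len.toNat).sum + Multiset.card s
      = (s.map fun Δ => Δ.len.toNat).sum := by
  induction s using Multiset.induction_on with
  | empty => rfl
  | cons Δ s ih =>
    have hΔ := hs Δ (Multiset.mem_cons_self Δ s)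
    have ih := ih fun x hx => hs x (Multiset.mem_cons_of_mem hx)
    by_cases h : Δ.2 ≤ Δ.1
    · rw [Multiset.filterMap_cons_none _ _ (removeEnd_eq_none.2 h)]
      simp only [Multiset.map_cons, Multiset.sum_cons, Multiset.card_cons, Segment.len] at ih ⊢
      omega
    · rw [Multiset.filterMap_cons_some _ _ _ (removeEnd_eq_some.2 ⟨by omega, rfl⟩)]
      simp only [Multiset.map_cons, Multiset.sum_cons, Multiset.card_cons, Segment.len] at ih ⊢
      omega

lemma mwIter_spec {l : List Segment} (hne : l ≠ []) (hl : IsMultisegment l) :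
    ∃ Δd l', mwIter l = some (Δd, l') ∧ totalSize l' < totalSize l ∧
      ∃ ch r m e, IsMWStep ch r m e ∧ (l : Multisegment) = ch + r ∧
        (l' : Multisegment) = r + ch.filterMap removeEnd := by
  obtain ⟨e, he⟩ : ∃ e, (l.map Prod.snd).max? = some e :=
    Option.ne_none_iff_exists'.1 (by simpa using hne)
  obtain ⟨x, hx, hxe⟩ := List.mem_map.1 (List.max?_mem he)
  obtain ⟨Δe, hps⟩ := Option.ne_none_iff_exists'.1 (pickShortest_ne_none hx hxe)
  obtain ⟨hΔe, hΔe2, hΔemax⟩ := pickShortest_spec hps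
  obtain ⟨m, hsum, hmem, hchain⟩ := pickChain_spec l.length Δe (l.erase Δe)
    (hl Δe hΔe) fun x hx => hl x (List.mem_of_mem_erase hx)
  set ch := (pickChain l.length Δe (l.erase Δe)).1
  set r := (pickChain l.length Δe (l.erase Δe)).2
  rw [coe_erase_segment, Multiset.cons_erase (Multiset.mem_coe.2 hΔe)] at hsum
  rw [hΔe2] at hchain
  have hstep : IsMWStep ch r m e :=
    { hchain with
      valid := hsum ▸ hl
      top := fun Q hQ hQe x hx hxe => by
        obtain rfl := hchain.eq_of_snd_eq hQ hmem (hQe.trans hΔe2.symm)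
        exact hΔemax x (Multiset.mem_coe.1 (hsum ▸ Multiset.mem_add.2 (.inr hx))) hxe }
  have hcard : 0 < Multiset.card (ch : Multisegment) :=
    Multiset.card_pos_iff_exists_mem.2 ⟨Δe, hmem⟩
  refine ⟨_, _, by simp only [mwIter, he, hps]; rfl, ?_, ch, r, m, e, hstep, hsum.symm,
    Multiset.coe_add _ _⟩
  have := sum_filterMap_removeEnd_add_card (fun Δ hΔ => hstep.valid_chain hΔ)
  rw [totalSize_eq_sum, totalSize_eq_sum, ← hsum, ← Multiset.coe_add, Multiset.map_add,
    Multiset.map_add, Multiset.sum_add, Multiset.sum_add, ← Multiset.filterMap_coe]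
  omega

theorem dualLowerBound_le_length (n : ℕ) (l : List Segment) (hl : IsMultisegment l)
    (hn : totalSize l ≤ n) :
    dualLowerBound l ≤ (mwAux n l).length ∧
      (Nested (l : Multisegment) → dualLowerBound l < (mwAux n l).length) := by
  have hnil (k : ℕ) : dualLowerBound ([] : List Segment) ≤ (mwAux k []).length ∧
      (Nested (([] : List Segment) : Multisegment) →
        dualLowerBound ([] : List Segment) < (mwAux k []).length) :=
    ⟨by simp [dualLowerBound_zero], fun h => absurd h not_nested_zero⟩
  induction n generalizing l with
  | zero =>
    obtain rfl : l = [] := by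
      by_contra hne
      obtain ⟨_, _, _, hlt, _⟩ := mwIter_spec hne hl
      omega
    exact hnil _
  | succ n ih =>
    obtain rfl | hne := eq_or_ne l []
    · exact hnil _
    obtain ⟨Δd, l', hiter, hlt, ch, r, m, e, hstep, hlch, hl'⟩ := mwIter_spec hne hl
    have hlen : (mwAux (n + 1) l).length = (mwAux n l').length + 1 := by
      simp [mwAux, hiter]
    obtain ⟨ih₁, ih₂⟩ := ih l' (hl' ▸ hstep.valid_reduce) (by omega)
    rw [hl'] at ih₁ ih₂
    rw [hlch, hlen]
    push_cast
    have hle := hstep.dualLowerBound_le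
    refine ⟨by omega, fun hN => ?_⟩
    rcases hstep.nested_or hN with hN' | ⟨y, hy, hyr⟩
    · have := ih₂ hN'
      omega
    · have := hstep.dualLowerBound_le_of_singleton_mem hy hyr
      omega

lemma dualLowerBound_lt_nSeg_dual {α : Multisegment} (hα : IsMultisegment α) (hN : Nested α) :
    dualLowerBound α < nSeg (dual α) := by
  have h := (dualLowerBound_le_length _ α.toList (by rwa [Multiset.coe_toList]) le_rfl).2
    (by rwa [Multiset.coe_toList])
  rw [Multiset.coe_toList] at h
  exact h

/-- if `n_{α̃} + n_α = S_α + c_α` then `α` is a ladder multisegment. -/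
theorem stmt13 (α : Multisegment) (hα : IsMultisegment α)
    (h : nSeg (dual α) + nSeg α = Ssize α + comp α) :
    IsLadder α := by
  refine isLadder_of_not_nested fun hN => ?_
  have := dualLowerBound_lt_nSeg_dual hα hN
  simp only [dualLowerBound] at this
  omega
end
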